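/- A functor of modules 𝕄 over a field K is D-proquasi-coherent if and only if for every K-vector space N and every natural K-linear transformation f : 𝕄 → 𝒩, the cokernel of f (computed objectwise) is the quasi-coherent module associated with coker(f_K); equivalently, the image of f is the quasi-coherent module associated with im(f_K). -/

import Mathlib

open TensorProduct

universe v

/-- The data of a (covariant) functor of modules on the category of commutative
`R`-algebras: an `S`-module `obj S` for every commutative `R`-algebra `S`, together
with transition maps along `R`-algebra homomorphisms. -/
structure ModuleFunctorData (R : Type) [CommRing R] : Type (v + 1) where
  obj : ∀ (S : Type) [CommRing S] [Algebra R S], Type v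
  addCommGroup : ∀ (S : Type) [CommRing S] [Algebra R S], AddCommGroup (obj S)
  module : ∀ (S : Type) [CommRing S] [Algebra R S],
    @Module S (obj S) _ (addCommGroup S).toAddCommMonoid
  map : ∀ {S S' : Type} [CommRing S] [Algebra R S] [CommRing S'] [Algebra R S'],
    (S →ₐ[R] S') → obj S → obj S'

attribute [instance] ModuleFunctorData.addCommGroup ModuleFunctorData.module

/-- A functor of `𝒦`-modules: a functor from commutative `R`-algebras to abelian groups
with a functorial module structure. -/
structure ModuleFunctor (R : Type) [CommRing R] extends ModuleFunctorData.{v} R :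
    Type (v + 1) where
  map_add : ∀ {S S' : Type} [CommRing S] [Algebra R S] [CommRing S'] [Algebra R S']
    (φ : S →ₐ[R] S') (x y : obj S), map φ (x + y) = map φ x + map φ y
  map_smul : ∀ {S S' : Type} [CommRing S] [Algebra R S] [CommRing S'] [Algebra R S']
    (φ : S →ₐ[R] S') (s : S) (x : obj S), map φ (s • x) = φ s • map φ x
  map_id : ∀ (S : Type) [CommRing S] [Algebra R S] (x : obj S), map (AlgHom.id R S) x = x
  map_comp : ∀ {S S' S'' : Type} [CommRing S] [Algebra R S] [CommRing S'] [Algebra R S']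
    [CommRing S''] [Algebra R S''] (φ : S →ₐ[R] S') (ψ : S' →ₐ[R] S'') (x : obj S),
    map (ψ.comp φ) x = map ψ (map φ x)

/-- Natural `R`-linear transformations from a functor of modules `F` to the
quasi-coherent module `𝒩 : S ↦ S ⊗_R N` associated with an `R`-module `N`. -/
def QCHom (R : Type) [CommRing R] (F : ModuleFunctor.{v} R) (N : Type) [AddCommGroup N]
    [Module R N] :=
  {f : ∀ (S : Type) [CommRing S] [Algebra R S], F.obj S →ₗ[S] S ⊗[R] N //
    ∀ (S S' : Type) [CommRing S] [Algebra R S] [CommRing S'] [Algebra R S']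
      (φ : S →ₐ[R] S') (x : F.obj S),
      f S' (F.map φ x) = LinearMap.rTensor N φ.toLinearMap (f S x)}

/-! The image of `f_S` always contains `S ⊗ im f_K`, by naturality of `f` along `K → S`.
Conversely, `f` followed by the projection onto the quasi-coherent module of `N ⧸ im f_K`
vanishes at `K`; if morphisms to quasi-coherent modules are determined by their value at `K`,
it vanishes at every `S`, and right exactness of `S ⊗ -` puts the image of `f_S` inside
`S ⊗ im f_K`. For the converse, the difference of two morphisms agreeing at `K` has zero image
at `K`, hence zero image at every `S`. -/

section TensorLemmas

variable {R : Type} [CommRing R] {N P : Type} [AddCommGroup N] [Module R N]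
  [AddCommGroup P] [Module R P]

lemma TensorProduct.lid_comp_baseChange (π : N →ₗ[R] P) :
    (TensorProduct.lid R P).toLinearMap ∘ₗ π.baseChange R
      = π ∘ₗ (TensorProduct.lid R N).toLinearMap := by
  ext; simp

lemma TensorProduct.rTensor_ofId_apply (S : Type) [CommRing S] [Algebra R S] (y : R ⊗[R] N) :
    (Algebra.ofId R S).toLinearMap.rTensor N y = 1 ⊗ₜ TensorProduct.lid R N y := by
  induction y using TensorProduct.induction_on with
  | zero => simp
  | tmul r n => simp [TensorProduct.smul_tmul, Algebra.algebraMap_eq_smul_one]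
  | add a b ha hb => simp [ha, hb, TensorProduct.tmul_add]

lemma LinearMap.baseChange_rTensor_comm (π : N →ₗ[R] P) {S S' : Type} [CommRing S]
    [Algebra R S] [CommRing S'] [Algebra R S'] (φ : S →ₐ[R] S') (y : S ⊗[R] N) :
    π.baseChange S' (φ.toLinearMap.rTensor N y)
      = φ.toLinearMap.rTensor P (π.baseChange S y) := by
  simp only [LinearMap.baseChange_eq_ltensor]
  rw [← LinearMap.comp_apply, LinearMap.lTensor_comp_rTensor,
    ← LinearMap.rTensor_comp_lTensor]
  rfl

lemma LinearMap.range_baseChange_bot_subtype (S : Type) [CommRing S] [Algebra R S] :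
    range ((⊥ : Submodule R N).subtype.baseChange S) = ⊥ := by
  rw [Subsingleton.elim (⊥ : Submodule R N).subtype 0, LinearMap.baseChange_zero,
    LinearMap.range_zero]

end TensorLemmas

namespace QCHom

variable {R : Type} [CommRing R] {F : ModuleFunctor.{v} R}
  {N P : Type} [AddCommGroup N] [Module R N] [AddCommGroup P] [Module R P]

@[ext]
lemma ext {f g : QCHom R F N}
    (h : ∀ (S : Type) [CommRing S] [Algebra R S], f.1 S = g.1 S) : f = g :=
  Subtype.ext <| funext fun S => funext fun _ => funext fun _ => h S

instance : Zero (QCHom R F N) :=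
  ⟨⟨fun _ _ _ => 0, fun _ _ _ _ _ _ _ _ => by simp⟩⟩

instance : Sub (QCHom R F N) :=
  ⟨fun f g => ⟨fun S _ _ => f.1 S - g.1 S, fun S S' _ _ _ _ φ x => by
    simp [f.2 S S' φ x, g.2 S S' φ x]⟩⟩

@[simp]
lemma zero_apply (S : Type) [CommRing S] [Algebra R S] : (0 : QCHom R F N).1 S = 0 := rfl

@[simp]
lemma sub_apply (f g : QCHom R F N) (S : Type) [CommRing S] [Algebra R S] :
    (f - g).1 S = f.1 S - g.1 S := rfl

def postcomp (f : QCHom R F N) (π : N →ₗ[R] P) : QCHom R F P :=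
  ⟨fun S _ _ => π.baseChange S ∘ₗ f.1 S, fun S S' _ _ _ _ φ x => by
    simp only [LinearMap.comp_apply, f.2 S S' φ x, LinearMap.baseChange_rTensor_comm]⟩

@[simp]
lemma postcomp_apply (f : QCHom R F N) (π : N →ₗ[R] P) (S : Type) [CommRing S]
    [Algebra R S] : (f.postcomp π).1 S = π.baseChange S ∘ₗ f.1 S := rfl

def baseRange (f : QCHom R F N) : Submodule R N :=
  LinearMap.range ((TensorProduct.lid R N).toLinearMap ∘ₗ f.1 R)

lemma baseRange_eq_bot_of_base_eq_zero {f : QCHom R F N} (h : f.1 R = 0) :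
    f.baseRange = ⊥ := by
  simp [baseRange, h]

lemma one_tmul_mem_range {f : QCHom R F N} {n : N} (hn : n ∈ f.baseRange)
    (S : Type) [CommRing S] [Algebra R S] : (1 : S) ⊗ₜ n ∈ LinearMap.range (f.1 S) := by
  obtain ⟨x, rfl⟩ := hn
  exact ⟨F.map (Algebra.ofId R S) x, by rw [f.2, TensorProduct.rTensor_ofId_apply]; rfl⟩

lemma range_baseChange_baseRange_le (f : QCHom R F N) (S : Type) [CommRing S]
    [Algebra R S] :
    LinearMap.range (f.baseRange.subtype.baseChange S) ≤ LinearMap.range (f.1 S) := by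
  rintro _ ⟨t, rfl⟩
  induction t using TensorProduct.induction_on with
  | zero => simp
  | tmul s n =>
    rw [LinearMap.baseChange_tmul, ← mul_one s, ← smul_eq_mul, ← TensorProduct.smul_tmul']
    exact Submodule.smul_mem _ s (one_tmul_mem_range n.2 S)
  | add a b ha hb => rw [map_add]; exact add_mem ha hb

lemma postcomp_mkQ_baseRange_base (f : QCHom R F N) :
    (f.postcomp f.baseRange.mkQ).1 R = 0 := by
  refine LinearMap.ext fun x => (TensorProduct.lid R _).injective ?_
  have hx : TensorProduct.lid R N (f.1 R x) ∈ f.baseRange := ⟨x, rfl⟩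
  rw [postcomp_apply, LinearMap.zero_apply, map_zero, ← LinearEquiv.coe_coe,
    LinearMap.comp_apply, ← LinearMap.comp_apply (TensorProduct.lid R _).toLinearMap,
    TensorProduct.lid_comp_baseChange]
  simpa using hx

lemma range_le_range_baseChange_baseRange (f : QCHom R F N)
    (hinj : Function.Injective fun g : QCHom R F (N ⧸ f.baseRange) => g.1 R)
    (S : Type) [CommRing S] [Algebra R S] :
    LinearMap.range (f.1 S) ≤ LinearMap.range (f.baseRange.subtype.baseChange S) := by
  have hzero : f.postcomp f.baseRange.mkQ = 0 := hinj (postcomp_mkQ_baseRange_base f)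
  rintro _ ⟨x, rfl⟩
  have hker : f.1 S x ∈ LinearMap.ker (f.baseRange.mkQ.lTensor S) := by
    simpa [← LinearMap.baseChange_eq_ltensor] using
      congrArg (fun g : QCHom R F _ => g.1 S x) hzero
  rw [lTensor_mkQ] at hker
  obtain ⟨t, ht⟩ := hker
  exact ⟨t, by rw [LinearMap.baseChange_eq_ltensor]; exact ht⟩

end QCHom

/-- Over a field `K`, a functor of modules `𝕄` is D-proquasi-coherent if
and only if for every `K`-vector space `N` and every natural transformation
`f : 𝕄 → 𝒩`, the image of `f` (objectwise) is the quasi-coherent module associated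
with `im f_K`: for every algebra `S`, the range of `f_S` equals the image of
`S ⊗_K (im f_K)` in `S ⊗_K N` (equivalently, the objectwise cokernel of `f` is the
quasi-coherent module associated with `coker f_K`). -/
theorem statement10 (K : Type) [Field K] (F : ModuleFunctor.{0} K) :
    (∀ (N : Type) [AddCommGroup N] [Module K N],
        Function.Injective (fun f : QCHom K F N => f.1 K)) ↔
    (∀ (N : Type) [AddCommGroup N] [Module K N] (f : QCHom K F N)
        (S : Type) [CommRing S] [Algebra K S],
        LinearMap.range (f.1 S)
          = LinearMap.range
              (LinearMap.baseChange S
                (LinearMap.range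
                  ((TensorProduct.lid K N).toLinearMap ∘ₗ f.1 K)).subtype)) := by
  constructor
  · intro hinj N _ _ f S _ _
    exact le_antisymm (f.range_le_range_baseChange_baseRange (hinj _) S)
      (f.range_baseChange_baseRange_le S)
  · intro himage N _ _ f g hfg
    have hbase : (f - g).baseRange = ⊥ :=
      QCHom.baseRange_eq_bot_of_base_eq_zero (sub_eq_zero.mpr hfg)
    ext1 S _ _
    rw [← sub_eq_zero, ← QCHom.sub_apply, ← LinearMap.range_eq_bot, himage,
      ← QCHom.baseRange, hbase, LinearMap.range_baseChange_bot_subtype]
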